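/- Let a₃ > 0, a₁' < 0 and A > 0 be real numbers. For ρ > 0 define f_ρ(r) = a₃·r³ + ρ·a₁'·r − A, and set ρ* = (3/|a₁'|)·(a₃·A²/4)^{1/3}. Then the equation f_ρ(r) = 0 has exactly one real root when 0 < ρ < ρ*, exactly two distinct real roots when ρ = ρ*, and exactly three distinct real roots when ρ > ρ*. -/

import Mathlib

/-!
Dividing by `a₃` turns `f_ρ` into the depressed cubic `r³ - 3s²r - p` with `s = √(ρ|a₁'|/(3a₃))`
and `p = A/a₃ > 0`, whose critical points are `±s`. Its value at the local maximum `-s` is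
`2s³ - p`, and `ρ*` is exactly the parameter at which `2s³ = p`; since `s` increases with `ρ`,
the number of roots is read off from the sign of `2s³ - p`. Existence of roots comes from the
intermediate value theorem, and there are no others because two distinct roots `a, b` satisfy
`a² + ab + b² = 3s²`, while three distinct roots sum to zero.
-/

open Set

section DepressedCubic

variable {c d s p : ℝ}

lemma sq_add_mul_add_sq_eq_of_cubic_roots {a b : ℝ} (ha : a ^ 3 - c * a - d = 0)
    (hb : b ^ 3 - c * b - d = 0) (hab : a ≠ b) : a ^ 2 + a * b + b ^ 2 = c := by
  have h : (a - b) * (a ^ 2 + a * b + b ^ 2 - c) = 0 := by linear_combination ha - hb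
  linarith [(mul_eq_zero.1 h).resolve_left (sub_ne_zero.2 hab)]

lemma add_add_eq_zero_of_cubic_roots {a b e : ℝ} (ha : a ^ 3 - c * a - d = 0)
    (hb : b ^ 3 - c * b - d = 0) (he : e ^ 3 - c * e - d = 0)
    (hab : a ≠ b) (hae : a ≠ e) (hbe : b ≠ e) : a + b + e = 0 := by
  have h : (b - e) * (a + b + e) = 0 := by
    linear_combination sq_add_mul_add_sq_eq_of_cubic_roots ha hb hab -
      sq_add_mul_add_sq_eq_of_cubic_roots ha he hae
  exact (mul_eq_zero.1 h).resolve_left (sub_ne_zero.2 hbe)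

lemma exists_mem_Ioo_cubic_root {a b : ℝ} (hab : a ≤ b)
    (h : (a ^ 3 - c * a - d) * (b ^ 3 - c * b - d) < 0) :
    ∃ r ∈ Ioo a b, r ^ 3 - c * r - d = 0 := by
  have hf : ContinuousOn (fun r : ℝ => r ^ 3 - c * r - d) (Icc a b) := by fun_prop
  rcases mul_neg_iff.1 h with ⟨ha, hb⟩ | ⟨ha, hb⟩
  · exact intermediate_value_Ioo' hab hf ⟨hb, ha⟩
  · exact intermediate_value_Ioo hab hf ⟨ha, hb⟩

lemma ncard_setOf_cubic_eq_zero_of_lt (hs : 0 ≤ s) (hp : 2 * s ^ 3 < p) :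
    {r : ℝ | r ^ 3 - 3 * s ^ 2 * r - p = 0}.ncard = 1 := by
  -- the cubic equals `(r - 2s)(r + s)² + 2s³ - p`
  have hroot_gt : ∀ r, r ^ 3 - 3 * s ^ 2 * r - p = 0 → 2 * s < r := by
    intro r hr
    by_contra! hle
    nlinarith [mul_nonpos_of_nonpos_of_nonneg (sub_nonpos.2 hle) (sq_nonneg (r + s))]
  have hpos : 0 < (2 * s + 1 + p) ^ 3 - 3 * s ^ 2 * (2 * s + 1 + p) - p := by
    have h : (2 * s + 1 + p) ^ 3 - 3 * s ^ 2 * (2 * s + 1 + p) - p =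
        (1 + p) * ((3 * s + 1 + p) ^ 2 - 1) + 1 + 2 * s ^ 3 := by ring
    rw [h]
    nlinarith [pow_nonneg hs 3]
  obtain ⟨r₀, -, hr₀⟩ := exists_mem_Ioo_cubic_root (c := 3 * s ^ 2) (d := p)
    (a := 2 * s) (b := 2 * s + 1 + p) (by nlinarith [pow_nonneg hs 3])
    (mul_neg_of_neg_of_pos (by linarith) hpos)
  refine ncard_eq_one.2 ⟨r₀, eq_singleton_iff_unique_mem.2 ⟨hr₀, fun r hr => ?_⟩⟩
  by_contra hne
  have := sq_add_mul_add_sq_eq_of_cubic_roots hr hr₀ hne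
  nlinarith [hroot_gt r hr, hroot_gt r₀ hr₀]

lemma ncard_setOf_cubic_eq_zero_of_eq (hs : s ≠ 0) (hp : 2 * s ^ 3 = p) :
    {r : ℝ | r ^ 3 - 3 * s ^ 2 * r - p = 0}.ncard = 2 := by
  subst hp
  have hroots : {r : ℝ | r ^ 3 - 3 * s ^ 2 * r - 2 * s ^ 3 = 0} = {2 * s, -s} := by
    ext r
    have h : r ^ 3 - 3 * s ^ 2 * r - 2 * s ^ 3 = (r - 2 * s) * (r + s) ^ 2 := by ring
    rw [mem_ofPred_eq, h]
    simp only [mul_eq_zero, sub_eq_zero, pow_eq_zero_iff two_ne_zero, add_eq_zero_iff_eq_neg,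
      mem_insert_iff, mem_singleton_iff]
  rw [hroots, ncard_pair]
  contrapose! hs
  linarith

lemma ncard_setOf_cubic_eq_zero_of_abs_lt (hp : |p| < 2 * s ^ 3) :
    {r : ℝ | r ^ 3 - 3 * s ^ 2 * r - p = 0}.ncard = 3 := by
  obtain ⟨hp₁, hp₂⟩ := abs_lt.1 hp
  have hs : 0 < s := by
    by_contra! hs
    nlinarith [pow_nonneg (neg_nonneg.2 hs) 3]
  -- the cubic alternates in sign at `-2s, -s, s, 2s`
  obtain ⟨a, ⟨-, ha₂⟩, ha⟩ := exists_mem_Ioo_cubic_root (c := 3 * s ^ 2) (d := p)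
    (a := -(2 * s)) (b := -s) (by linarith) (mul_neg_of_neg_of_pos (by linarith) (by linarith))
  obtain ⟨b, ⟨hb₁, hb₂⟩, hb⟩ := exists_mem_Ioo_cubic_root (c := 3 * s ^ 2) (d := p)
    (a := -s) (b := s) (by linarith) (mul_neg_of_pos_of_neg (by linarith) (by linarith))
  obtain ⟨e, ⟨he₁, -⟩, he⟩ := exists_mem_Ioo_cubic_root (c := 3 * s ^ 2) (d := p)
    (a := s) (b := 2 * s) (by linarith) (mul_neg_of_neg_of_pos (by linarith) (by linarith))
  have hab : a ≠ b := by linarith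
  have hae : a ≠ e := by linarith
  have hbe : b ≠ e := by linarith
  refine ncard_eq_three.2 ⟨a, b, e, hab, hae, hbe, Subset.antisymm (fun r hr => ?_) ?_⟩
  · by_contra hr'
    simp only [mem_insert_iff, mem_singleton_iff, not_or] at hr'
    obtain ⟨hra, hrb, hre⟩ := hr'
    have habe := add_add_eq_zero_of_cubic_roots ha hb he hab hae hbe
    have habr := add_add_eq_zero_of_cubic_roots ha hb hr hab (Ne.symm hra) (Ne.symm hrb)
    exact hre (by linarith)
  · rintro r (rfl | rfl | rfl) <;> assumption

end DepressedCubic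

lemma setOf_cubic_eq_zero_eq_depressed {a b d s : ℝ} (ha : a ≠ 0) (hs : 3 * a * s ^ 2 = -b) :
    {r : ℝ | a * r ^ 3 + b * r - d = 0} = {r | r ^ 3 - 3 * s ^ 2 * r - d / a = 0} := by
  ext r
  have h : a * r ^ 3 + b * r - d = a * (r ^ 3 - 3 * s ^ 2 * r - d / a) := by
    field_simp
    linear_combination r * hs
  simp only [mem_ofPred_eq, h, mul_eq_zero, ha, false_or]

lemma two_mul_sqrt_rpow_div_pow_three {a A : ℝ} (ha : 0 < a) (hA : 0 < A) :
    2 * √((a * A ^ 2 / 4) ^ ((1 : ℝ) / 3) / a) ^ 3 = A / a := by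
  have hc : ((a * A ^ 2 / 4) ^ ((1 : ℝ) / 3)) ^ 3 = a * A ^ 2 / 4 := by
    rw [← Real.rpow_natCast, ← Real.rpow_mul (by positivity)]
    norm_num
  refine (pow_left_inj₀ (by positivity) (by positivity) two_ne_zero).1 ?_
  rw [mul_pow, ← pow_mul, show 3 * 2 = 2 * 3 by rfl, pow_mul,
    Real.sq_sqrt (by positivity), div_pow, hc]
  field_simp
  ring

/-- For the cubic `f_ρ(r) = a₃r³ + ρa₁'r − A` with `a₃ > 0`, `a₁' < 0`, `A > 0`, and
`ρ* = (3/|a₁'|)(a₃A²/4)^{1/3}`, the equation `f_ρ(r) = 0` has exactly one real root for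
`0 < ρ < ρ*`, exactly two for `ρ = ρ*`, and exactly three for `ρ > ρ*`. -/
theorem stmt_0 (a₃ a₁' A : ℝ) (ha₃ : 0 < a₃) (ha₁' : a₁' < 0) (hA : 0 < A)
    (f : ℝ → ℝ → ℝ) (hf : ∀ ρ r, f ρ r = a₃ * r ^ 3 + ρ * a₁' * r - A)
    (ρstar : ℝ) (hρstar : ρstar = (3 / |a₁'|) * (a₃ * A ^ 2 / 4) ^ ((1 : ℝ) / 3)) :
    ∀ ρ : ℝ, 0 < ρ →
      ((ρ < ρstar → {r : ℝ | f ρ r = 0}.ncard = 1) ∧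
       (ρ = ρstar → {r : ℝ | f ρ r = 0}.ncard = 2) ∧
       (ρstar < ρ → {r : ℝ | f ρ r = 0}.ncard = 3)) := by
  intro ρ hρ
  set k := |a₁'| / (3 * a₃) with hk_def
  have hk : 0 < k := div_pos (abs_pos.2 ha₁'.ne) (by positivity)
  have hroots : {r | f ρ r = 0} = {r | r ^ 3 - 3 * √(ρ * k) ^ 2 * r - A / a₃ = 0} := by
    simp only [hf]
    refine setOf_cubic_eq_zero_eq_depressed ha₃.ne' ?_
    rw [Real.sq_sqrt (by positivity), hk_def, abs_of_neg ha₁']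
    field_simp
  have hmono : StrictMonoOn (fun x => 2 * √(x * k) ^ 3) (Ici 0) := fun x hx y _ hxy => by
    have := Real.sqrt_lt_sqrt (mul_nonneg hx hk.le) (mul_lt_mul_of_pos_right hxy hk)
    dsimp only
    gcongr
  have hρstar₀ : 0 ≤ ρstar := by rw [hρstar]; positivity
  have hstar : 2 * √(ρstar * k) ^ 3 = A / a₃ := by
    rw [← two_mul_sqrt_rpow_div_pow_three ha₃ hA, hρstar, hk_def]
    congr 3
    field_simp [(abs_pos.2 ha₁'.ne).ne']
  rw [hroots]
  refine ⟨fun h => ?_, fun h => ?_, fun h => ?_⟩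
  · exact ncard_setOf_cubic_eq_zero_of_lt (Real.sqrt_nonneg _) (hstar ▸ hmono hρ.le hρstar₀ h)
  · subst h
    exact ncard_setOf_cubic_eq_zero_of_eq (Real.sqrt_ne_zero'.2 (by positivity)) hstar
  · refine ncard_setOf_cubic_eq_zero_of_abs_lt ?_
    rw [abs_of_pos (div_pos hA ha₃), ← hstar]
    exact hmono hρstar₀ hρ.le h
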